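/- Let D ≥ 1 be an integer and let θ : ℝ^D → ℝ be a twice continuously differentiable radial function (i.e. θ(x) depends only on the Euclidean norm ‖x‖), and let C ≥ 0 be such that the operator norm of the second Fréchet derivative satisfies ‖d²θ(z)‖ ≤ C for every z ∈ ℝ^D. Then for all x, y ∈ ℝ^D one has |θ(x) − θ(y)| ≤ (C/2)·| ‖x‖² − ‖y‖² |. -/

import Mathlib

/-!
Restrict `θ` to a line through the origin: `g t = θ (t • e)` with `‖e‖ = 1`. Radiality makes `g`
even, so `g' 0 = 0`, and the bound on `d²θ` makes `g'` `C`-Lipschitz; hence `|g' t| ≤ C |t|`.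
Integrating this from `‖y‖` to `‖x‖` gives the claim, since `θ x = g ‖x‖`.
-/

open Set

theorem deriv_zero_eq_zero_of_even {g : ℝ → ℝ} (hg : ∀ t, g (-t) = g t) : deriv g 0 = 0 := by
  have h := deriv_comp_neg g 0
  simp only [hg, neg_zero] at h
  linarith

theorem abs_deriv_le_of_even {g : ℝ → ℝ} {C : ℝ} (hg : ∀ t, g (-t) = g t)
    (hg' : ∀ s t, |deriv g s - deriv g t| ≤ C * |s - t|) (t : ℝ) : |deriv g t| ≤ C * |t| := by
  simpa [deriv_zero_eq_zero_of_even hg] using hg' t 0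

theorem abs_sub_le_of_abs_deriv_le_mul_self {g : ℝ → ℝ} {C a b : ℝ} (hg : Differentiable ℝ g)
    (hg' : ∀ t, 0 ≤ t → |deriv g t| ≤ C * t) (ha : 0 ≤ a) (hb : 0 ≤ b) :
    |g a - g b| ≤ C / 2 * |a ^ 2 - b ^ 2| := by
  wlog hba : b ≤ a generalizing a b
  · rw [abs_sub_comm, abs_sub_comm (a ^ 2)]
    exact this hb ha (le_of_not_ge hba)
  have hB (t : ℝ) : HasDerivAt (fun t => C / 2 * (t ^ 2 - b ^ 2)) (C * t) t :=
    (((hasDerivAt_pow 2 t).sub_const (b ^ 2)).const_mul (C / 2)).congr_deriv (by ring)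
  have fence := image_norm_le_of_norm_deriv_right_le_deriv_boundary
    (f := fun t => g t - g b) (a := b) (b := a)
    (hg.continuous.sub continuous_const).continuousOn
    (fun t _ => ((hg t).hasDerivAt.sub_const (g b)).hasDerivWithinAt)
    (by simp) hB (fun t ht => hg' t (hb.trans ht.1)) ⟨hba, le_rfl⟩
  rwa [abs_of_nonneg (show 0 ≤ a ^ 2 - b ^ 2 by nlinarith)]

section Radial

variable {E F : Type*} [NormedAddCommGroup E] [NormedSpace ℝ E]
  [NormedAddCommGroup F] [NormedSpace ℝ F]

theorem norm_fderiv_sub_le_of_norm_iteratedFDeriv_two_le {θ : E → F} {C : ℝ}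
    (hθ : ContDiff ℝ 2 θ) (hC : ∀ z, ‖iteratedFDeriv ℝ 2 θ z‖ ≤ C) (x y : E) :
    ‖fderiv ℝ θ x - fderiv ℝ θ y‖ ≤ C * ‖x - y‖ := by
  have hdiff : Differentiable ℝ (fderiv ℝ θ) :=
    (hθ.fderiv_right (m := 1) le_rfl).differentiable one_ne_zero
  refine convex_univ.norm_image_sub_le_of_norm_fderiv_le (fun z _ => hdiff z) (fun z _ => ?_)
    (mem_univ y) (mem_univ x)
  rw [← norm_iteratedFDeriv_one, norm_iteratedFDeriv_fderiv]
  exact hC z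

theorem hasDerivAt_comp_smul_const {θ : E → F} (hθ : Differentiable ℝ θ) (e : E) (t : ℝ) :
    HasDerivAt (fun s : ℝ => θ (s • e)) (fderiv ℝ θ (t • e) e) t :=
  (hθ (t • e)).hasFDerivAt.comp_hasDerivAt t (by simpa using (hasDerivAt_id t).smul_const e)

theorem abs_deriv_comp_smul_sub_le {θ : E → ℝ} {C : ℝ} (hθ : ContDiff ℝ 2 θ)
    (hC : ∀ z, ‖iteratedFDeriv ℝ 2 θ z‖ ≤ C) {e : E} (he : ‖e‖ = 1) (s t : ℝ) :
    |deriv (fun r : ℝ => θ (r • e)) s - deriv (fun r : ℝ => θ (r • e)) t| ≤ C * |s - t| := by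
  have hd := hθ.differentiable two_ne_zero
  rw [(hasDerivAt_comp_smul_const hd e s).deriv, (hasDerivAt_comp_smul_const hd e t).deriv,
    ← sub_apply]
  calc ‖(fderiv ℝ θ (s • e) - fderiv ℝ θ (t • e)) e‖
      ≤ ‖fderiv ℝ θ (s • e) - fderiv ℝ θ (t • e)‖ * ‖e‖ := ContinuousLinearMap.le_opNorm _ _
    _ ≤ C * ‖s • e - t • e‖ * ‖e‖ := by
      gcongr
      exact norm_fderiv_sub_le_of_norm_iteratedFDeriv_two_le hθ hC _ _
    _ = C * |s - t| := by rw [← sub_smul, norm_smul, he, Real.norm_eq_abs, mul_one, mul_one]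

theorem abs_sub_le_of_radial_of_norm_iteratedFDeriv_two_le {θ : E → ℝ} {C : ℝ}
    (hθ : ContDiff ℝ 2 θ) (hrad : ∀ x y : E, ‖x‖ = ‖y‖ → θ x = θ y)
    (hC : ∀ z, ‖iteratedFDeriv ℝ 2 θ z‖ ≤ C) (x y : E) :
    |θ x - θ y| ≤ C / 2 * |‖x‖ ^ 2 - ‖y‖ ^ 2| := by
  rcases subsingleton_or_nontrivial E with _ | _
  · simp [Subsingleton.elim x y]
  obtain ⟨e, he⟩ := exists_norm_eq E zero_le_one
  have hline (z : E) : θ z = θ (‖z‖ • e) := hrad _ _ (by simp [norm_smul, he])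
  have heven (t : ℝ) : θ ((-t) • e) = θ (t • e) := hrad _ _ (by simp [norm_smul])
  rw [hline x, hline y]
  refine abs_sub_le_of_abs_deriv_le_mul_self (g := fun t : ℝ => θ (t • e))
    ((hθ.differentiable two_ne_zero).comp (differentiable_id.smul_const e))
    (fun t ht => ?_) (norm_nonneg x) (norm_nonneg y)
  simpa [abs_of_nonneg ht] using
    abs_deriv_le_of_even heven (abs_deriv_comp_smul_sub_le hθ hC he) t

end Radial

theorem radial_function_sq_norm_lipschitz_general
    (D : ℕ)
    (θ : EuclideanSpace ℝ (Fin D) → ℝ)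
    (hθ : ContDiff ℝ 2 θ)
    (hrad : ∀ x y : EuclideanSpace ℝ (Fin D), ‖x‖ = ‖y‖ → θ x = θ y)
    (C : ℝ)
    (hC2 : ∀ z : EuclideanSpace ℝ (Fin D), ‖iteratedFDeriv ℝ 2 θ z‖ ≤ C) :
    ∀ x y : EuclideanSpace ℝ (Fin D),
      |θ x - θ y| ≤ C / 2 * |‖x‖ ^ 2 - ‖y‖ ^ 2| :=
  abs_sub_le_of_radial_of_norm_iteratedFDeriv_two_le hθ hrad hC2

/-- **Lemma (radial functions).** If `θ : ℝ^D → ℝ` is `C²` and radial, and the operator norm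
of its second Fréchet derivative is bounded by `C` everywhere, then
`|θ x - θ y| ≤ (C/2) * |‖x‖² - ‖y‖²|` for all `x, y`. -/
theorem radial_function_sq_norm_lipschitz
    (D : ℕ) (hD : 1 ≤ D)
    (θ : EuclideanSpace ℝ (Fin D) → ℝ)
    (hθ : ContDiff ℝ 2 θ)
    (hrad : ∀ x y : EuclideanSpace ℝ (Fin D), ‖x‖ = ‖y‖ → θ x = θ y)
    (C : ℝ) (hC : 0 ≤ C)
    (hC2 : ∀ z : EuclideanSpace ℝ (Fin D), ‖iteratedFDeriv ℝ 2 θ z‖ ≤ C) :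
    ∀ x y : EuclideanSpace ℝ (Fin D),
      |θ x - θ y| ≤ C / 2 * |‖x‖ ^ 2 - ‖y‖ ^ 2| :=
  radial_function_sq_norm_lipschitz_general D θ hθ hrad C hC2
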